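/- For each n, the number of M-diagrams on 3n points (partitions of {1,...,3n} into triples (a,b,c) with pairwise non-crossing left arcs and pairwise non-crossing right arcs) equals 2(3n)!/(n!(n+1)!(n+2)!). -/

import Mathlib

/-- An M-diagram on `3n` points: a partition of `Fin (3n)` into `n` triples,
recorded by assigning to each point `i` the left (`a i`), middle (`b i`) and
right (`c i`) endpoints of the triple containing `i`, such that no two left
arcs `(a,b)` cross and no two right arcs `(b,c)` cross. -/
structure MDiagram (n : ℕ) where
  a : Fin (3 * n) → Fin (3 * n)
  b : Fin (3 * n) → Fin (3 * n)
  c : Fin (3 * n) → Fin (3 * n)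
  hab : ∀ i, a i < b i
  hbc : ∀ i, b i < c i
  mem_triple : ∀ i, i = a i ∨ i = b i ∨ i = c i
  coherent : ∀ i j, (j = a i ∨ j = b i ∨ j = c i) →
    a j = a i ∧ b j = b i ∧ c j = c i
  noncrossL : ∀ i j, ¬ (a i < a j ∧ a j < b i ∧ b i < b j)
  noncrossR : ∀ i j, ¬ (b i < b j ∧ b j < c i ∧ c i < c j)

/-- The boundary word of an M-diagram: `+` (= `2 : Fin 3`) at left endpoints,
`0` (= `1`) at middle endpoints, `-` (= `0`) at right endpoints. -/
def mword {n : ℕ} (m : MDiagram n) : Fin (3 * n) → Fin 3 :=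
  fun i => if i = m.a i then 2 else if i = m.b i then 1 else 0

/-!
Writing `2`, `1`, `0` at the left, middle and right endpoints of an M-diagram gives a ballot
(Yamanouchi) word with `n` letters of each kind. The word determines the diagram: the left arcs
form a noncrossing matching of the `2`s with the `1`s, and a noncrossing matching with prescribed
openers and closers is unique. Conversely, for every ballot word the parenthesis matchings of
`2`s with `1`s and of `1`s with `0`s (read off the height paths `#2 - #1` and `#1 - #0` of the
prefixes) glue to an M-diagram with that word. Ballot words are counted by removing the last
letter, and the resulting recursion is solved by the hook length formula.
-/

open scoped Nat

lemma List.length_eq_count_fin_three (w : List (Fin 3)) :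
    w.length = w.count 0 + w.count 1 + w.count 2 := by
  have := Multiset.sum_count_eq_card (s := Finset.univ) (m := (w : Multiset (Fin 3)))
    (fun a _ => Finset.mem_univ a)
  simpa [Fin.sum_univ_three, add_assoc] using this.symm

lemma List.count_take_add_one {α : Type*} [DecidableEq α] (l : List α) (k : ℕ) (z : α) :
    (l.take (k + 1)).count z = (l.take k).count z + if l[k]? = some z then 1 else 0 := by
  rw [List.take_add_one, List.count_append]
  cases l[k]? <;> simp [List.count_singleton]

lemma List.count_take_ofFn {α : Type*} [DecidableEq α] {N : ℕ} (v : Fin N → α) (t : α)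
    (k : ℕ) : ((List.ofFn v).take k).count t = ({i | v i = t} ∩ {i | i.val < k}).ncard := by
  have hcard : ((List.ofFn v).take k).count t =
      (Finset.univ.filter fun i => v i = t ∧ i.val < k).card := by
    induction N generalizing k with
    | zero => simp
    | succ N ih =>
      rcases k with _ | k
      · simp
      · rw [List.ofFn_succ, List.take_succ_cons, List.count_cons, ih, Fin.card_filter_univ_succ']
        simp [Fin.val_succ, add_comm]
  rw [hcard, ← Set.ncard_coe_finset]
  congr 1
  ext i
  simp

lemma List.ncard_eq_sum_ncard_concat {α : Type*} [Fintype α] {S : Set (List α)}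
    (hS : S.Finite) (hnil : [] ∉ S) : S.ncard = ∑ t, ((· ++ [t]) ⁻¹' S).ncard := by
  have hinj (t : α) : Function.Injective (· ++ [t]) := List.append_left_injective [t]
  have hS_eq : S = ⋃ t, (· ++ [t]) '' ((· ++ [t]) ⁻¹' S) := by
    ext w
    simp only [Set.mem_iUnion, Set.mem_image, Set.mem_preimage]
    constructor
    · intro hw
      obtain ⟨u, t, rfl⟩ :=
        (List.eq_nil_or_concat' w).resolve_left (by rintro rfl; exact hnil hw)
      exact ⟨t, u, hw, rfl⟩
    · rintro ⟨t, u, hu, rfl⟩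
      exact hu
  conv_lhs => rw [hS_eq]
  rw [Set.ncard_iUnion_of_finite, finsum_eq_sum_of_fintype]
  · simp only [Set.ncard_image_of_injective _ (hinj _)]
  · exact fun t => (hS.preimage (hinj t).injOn).image _
  · intro t t' hne
    refine Set.disjoint_left.2 ?_
    rintro _ ⟨u, -, rfl⟩ ⟨u', -, h⟩
    exact hne (List.singleton_injective (List.append_inj' h rfl).2).symm

def IsBallot (w : List (Fin 3)) : Prop :=
  ∀ u, u <+: w → u.count 1 ≤ u.count 2 ∧ u.count 0 ≤ u.count 1

def ballotWords (p q r : ℕ) : Set (List (Fin 3)) :=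
  {w | IsBallot w ∧ w.count 2 = p ∧ w.count 1 = q ∧ w.count 0 = r}

lemma concat_mem_ballotWords_iff {u : List (Fin 3)} {t : Fin 3} {p q r : ℕ}
    (hq : q ≤ p) (hr : r ≤ q) :
    u ++ [t] ∈ ballotWords p q r ↔ IsBallot u ∧
      (u ++ [t]).count 2 = p ∧ (u ++ [t]).count 1 = q ∧ (u ++ [t]).count 0 = r := by
  simp only [ballotWords, IsBallot, Set.mem_ofPred_eq, List.prefix_concat_iff, or_imp,
    forall_and, forall_eq]
  constructor
  · rintro ⟨⟨⟨-, hu1⟩, -, hu0⟩, hc⟩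
    exact ⟨⟨hu1, hu0⟩, hc⟩
  · rintro ⟨⟨hu1, hu0⟩, h2, h1, h0⟩
    exact ⟨⟨⟨by omega, hu1⟩, by omega, hu0⟩, h2, h1, h0⟩

lemma preimage_concat_two_ballotWords {p q r : ℕ} (hq : q ≤ p + 1) (hr : r ≤ q) :
    (· ++ [2]) ⁻¹' ballotWords (p + 1) q r = ballotWords p q r := by
  ext u
  rw [Set.mem_preimage, concat_mem_ballotWords_iff hq hr]
  simp [ballotWords]

lemma preimage_concat_one_ballotWords {p q r : ℕ} (hq : q + 1 ≤ p) (hr : r ≤ q + 1) :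
    (· ++ [1]) ⁻¹' ballotWords p (q + 1) r = ballotWords p q r := by
  ext u
  rw [Set.mem_preimage, concat_mem_ballotWords_iff hq hr]
  simp [ballotWords]

lemma preimage_concat_zero_ballotWords {p q r : ℕ} (hq : q ≤ p) (hr : r + 1 ≤ q) :
    (· ++ [0]) ⁻¹' ballotWords p q (r + 1) = ballotWords p q r := by
  ext u
  rw [Set.mem_preimage, concat_mem_ballotWords_iff hq hr]
  simp [ballotWords]

lemma preimage_concat_one_ballotWords_zero (p r : ℕ) :
    (· ++ [1]) ⁻¹' ballotWords p 0 r = ∅ := by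
  ext u
  simp [ballotWords]

lemma preimage_concat_zero_ballotWords_zero (p q : ℕ) :
    (· ++ [0]) ⁻¹' ballotWords p q 0 = ∅ := by
  ext u
  simp [ballotWords]

lemma ballotWords_finite (p q r : ℕ) : (ballotWords p q r).Finite :=
  (List.finite_length_eq (Fin 3) (r + q + p)).subset fun w ⟨_, h2, h1, h0⟩ => by
    simp [List.length_eq_count_fin_three w, h0, h1, h2]

lemma ballotWords_eq_empty {p q r : ℕ} (h : ¬ (q ≤ p ∧ r ≤ q)) : ballotWords p q r = ∅ :=
  Set.eq_empty_of_forall_notMem fun w ⟨hw, h2, h1, h0⟩ => h (by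
    have := hw w List.prefix_rfl
    omega)

lemma ballotWords_zero : ballotWords 0 0 0 = {[]} := by
  ext w
  constructor
  · rintro ⟨-, h2, h1, h0⟩
    simp [← List.length_eq_zero_iff, List.length_eq_count_fin_three w, h0, h1, h2]
  · rintro rfl
    refine ⟨fun u hu => ?_, rfl, rfl, rfl⟩
    simp [List.prefix_nil.1 hu]

lemma nil_notMem_ballotWords {p q r : ℕ} (h : p ≠ 0) : [] ∉ ballotWords p q r :=
  fun ⟨_, h2, _⟩ => h (by simpa using h2.symm)

lemma length_of_mem_ballotWords {n : ℕ} {l : List (Fin 3)} (hl : l ∈ ballotWords n n n) :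
    l.length = 3 * n := by
  rw [List.length_eq_count_fin_three, hl.2.1, hl.2.2.1, hl.2.2.2]
  ring

lemma val_lt_length_of_mem_ballotWords {n : ℕ} {l : List (Fin 3)} (hl : l ∈ ballotWords n n n)
    (i : Fin (3 * n)) : i.val < l.length :=
  (length_of_mem_ballotWords hl).symm ▸ i.isLt

lemma ncard_ballotWords_succ_mul_factorial {p q r : ℕ} (hq : q ≤ p + 1) (hr : r ≤ q)
    (ih : ∀ p' q' r', p' + q' + r' = p + q + r → q' ≤ p' + 1 → r' ≤ q' + 1 →
      ((ballotWords p' q' r').ncard * ((p' + 2)! * (q' + 1)! * r' !) : ℤ) =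
        (p + q + r)! * ((p' - q' + 1) * (q' - r' + 1) * (p' - r' + 2))) :
    ((ballotWords (p + 1) q r).ncard * ((p + 1 + 2)! * (q + 1)! * r !) : ℤ) =
      (p + 1 + q + r)! * ((p + 1 - q + 1) * (q - r + 1) * (p + 1 - r + 2)) := by
  have hsum := List.ncard_eq_sum_ncard_concat (ballotWords_finite (p + 1) q r)
    (nil_notMem_ballotWords p.succ_ne_zero)
  rw [Fin.sum_univ_three, preimage_concat_two_ballotWords hq hr] at hsum
  have h2 := ih p q r rfl (by omega) (by omega)
  have fp : ((p + 1 + 2)! : ℤ) = (p + 3) * (p + 2)! := by push_cast [Nat.factorial_succ]; ring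
  have fN : ((p + 1 + q + r)! : ℤ) = (p + q + r + 1) * (p + q + r)! := by
    rw [show p + 1 + q + r = p + q + r + 1 by ring, Nat.factorial_succ]; push_cast; ring
  rw [fp, fN]
  rcases q with _ | q
  · obtain rfl : r = 0 := by omega
    rw [preimage_concat_one_ballotWords_zero, preimage_concat_zero_ballotWords_zero,
      Set.ncard_empty] at hsum
    rw [hsum]
    push_cast at h2 ⊢
    linear_combination (↑p + 3 : ℤ) * h2
  have fq : ((q + 1 + 1)! : ℤ) = (q + 2) * (q + 1)! := by push_cast [Nat.factorial_succ]; ring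
  rw [fq] at h2 ⊢
  rcases r with _ | r
  · rw [preimage_concat_one_ballotWords (by omega) (by omega),
      preimage_concat_zero_ballotWords_zero, Set.ncard_empty] at hsum
    have h1 := ih (p + 1) q 0 (by omega) (by omega) (by omega)
    rw [fp] at h1
    rw [hsum]
    push_cast at h1 h2 ⊢
    linear_combination (↑p + 3 : ℤ) * h2 + (↑q + 2 : ℤ) * h1
  · rw [preimage_concat_one_ballotWords (by omega) (by omega),
      preimage_concat_zero_ballotWords (by omega) (by omega)] at hsum
    have h1 := ih (p + 1) q (r + 1) (by omega) (by omega) (by omega)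
    have h0 := ih (p + 1) (q + 1) r (by omega) (by omega) (by omega)
    have fr : ((r + 1)! : ℤ) = (r + 1) * r ! := by push_cast [Nat.factorial_succ]; ring
    rw [fp, fq] at h0
    rw [fp, fr] at h1
    rw [fr] at h2 ⊢
    rw [hsum]
    push_cast at h0 h1 h2 ⊢
    linear_combination (↑p + 3 : ℤ) * h2 + (↑q + 2 : ℤ) * h1 + (↑r + 1 : ℤ) * h0

/-- Ballot words with `p` twos, `q` ones and `r` zeros are the standard Young tableaux of shape
`(p, q, r)`, counted by the hook length formula. -/
theorem ncard_ballotWords_mul_factorial (p q r : ℕ) (hq : q ≤ p + 1) (hr : r ≤ q + 1) :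
    ((ballotWords p q r).ncard * ((p + 2)! * (q + 1)! * r !) : ℤ) =
      (p + q + r)! * ((p - q + 1) * (q - r + 1) * (p - r + 2)) := by
  obtain ⟨N, hN⟩ : ∃ N, p + q + r = N := ⟨_, rfl⟩
  induction N generalizing p q r with
  | zero =>
    obtain ⟨rfl, rfl, rfl⟩ : p = 0 ∧ q = 0 ∧ r = 0 := by omega
    simp [ballotWords_zero]
  | succ N ih =>
    by_cases hvalid : q ≤ p ∧ r ≤ q
    · obtain ⟨p, rfl⟩ : ∃ p', p = p' + 1 := ⟨p - 1, by omega⟩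
      have := ncard_ballotWords_succ_mul_factorial hvalid.1 hvalid.2
        fun p' q' r' h hq' hr' => by rw [ih p' q' r' hq' hr' (by omega), h]
      exact_mod_cast this
    · rw [ballotWords_eq_empty hvalid]
      obtain rfl | rfl : q = p + 1 ∨ r = q + 1 := by omega
      all_goals push_cast [Set.ncard_empty]; ring

structure IsNoncrossingMatching {α : Type*} [LinearOrder α] (f : α → α) (C O : Set α) :
    Prop where
  bijOn : Set.BijOn f C O
  lt : ∀ j ∈ C, f j < j
  noncrossing : ∀ j ∈ C, ∀ j' ∈ C, ¬ (f j < f j' ∧ f j' < j ∧ j < j')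

namespace IsNoncrossingMatching

variable {α : Type*} [LinearOrder α] {f g : α → α} {C O : Set α}

lemma not_lt_of_eqOn_Iio (hf : IsNoncrossingMatching f C O) (hg : IsNoncrossingMatching g C O)
    {j : α} (hj : j ∈ C) (heq : Set.EqOn f g (C ∩ Set.Iio j)) : ¬ f j < g j := by
  -- The `f`-arc starting at `g j` lies inside the `f`-arc `(f j, j)`, so it ends at some
  -- `j' < j`; then `g j' = f j' = g j` contradicts injectivity of `g`.
  intro hlt
  obtain ⟨j', hj', hfj'⟩ := hf.bijOn.surjOn (hg.bijOn.mapsTo hj)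
  have hj'j : j' < j := by
    refine lt_of_le_of_ne (not_lt.1 fun h => hf.noncrossing j hj j' hj' ⟨?_, ?_, h⟩) ?_
    · rwa [hfj']
    · rw [hfj']; exact hg.lt j hj
    · rintro rfl; exact hlt.ne hfj'
  exact hj'j.ne (hg.bijOn.injOn hj' hj (by rw [← heq ⟨hj', hj'j⟩, hfj']))

theorem eqOn [WellFoundedLT α] (hf : IsNoncrossingMatching f C O)
    (hg : IsNoncrossingMatching g C O) : Set.EqOn f g C := by
  intro j hj
  induction j using WellFoundedLT.induction with
  | _ j ih =>
    have heq : Set.EqOn f g (C ∩ Set.Iio j) := fun j' hj' => ih j' hj'.2 hj'.1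
    exact le_antisymm (not_lt.1 (hg.not_lt_of_eqOn_Iio hf hj heq.symm))
      (not_lt.1 (hf.not_lt_of_eqOn_Iio hg hj heq))

end IsNoncrossingMatching

lemma Set.ncard_inter_le_of_mapsTo {α : Type*} [Preorder α] [Finite α] {f : α → α}
    {C O L : Set α} (hmaps : Set.MapsTo f C O) (hinj : Set.InjOn f C)
    (hle : ∀ j ∈ C, f j ≤ j)
    (hL : IsLowerSet L) : (C ∩ L).ncard ≤ (O ∩ L).ncard :=
  Set.ncard_le_ncard_of_injOn f (fun j hj => ⟨hmaps hj.1, hL (hle j hj.1) hj.2⟩)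
    (hinj.mono Set.inter_subset_left)

structure MotzkinPath (N : ℕ) where
  height : ℕ → ℕ
  height_zero : height 0 = 0
  height_length : height N = 0
  step : ∀ k < N, height (k + 1) = height k + 1 ∨ height (k + 1) = height k ∨
    height k = height (k + 1) + 1

namespace MotzkinPath

variable {N : ℕ} (P : MotzkinPath N)

def IsUp (i : ℕ) : Prop := i < N ∧ P.height (i + 1) = P.height i + 1

def IsDown (j : ℕ) : Prop := j < N ∧ P.height j = P.height (j + 1) + 1

noncomputable def closing (i : ℕ) : ℕ := sInf {k | i < k ∧ P.height (k + 1) ≤ P.height i}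

def opening (j : ℕ) : ℕ := Nat.findGreatest (fun i => P.height i < P.height j) j

variable {P}

lemma closing_mem {i : ℕ} (hi : P.IsUp i) :
    P.closing i ∈ {k | i < k ∧ P.height (k + 1) ≤ P.height i} ∧ P.closing i < N := by
  have hN : i + 1 < N := by
    refine lt_of_le_of_ne hi.1 fun h => ?_
    have := hi.2
    rw [h, P.height_length] at this
    omega
  have hmem : N - 1 ∈ {k | i < k ∧ P.height (k + 1) ≤ P.height i} := by
    refine ⟨by omega, ?_⟩
    rw [Nat.sub_add_cancel (by omega), P.height_length]
    exact Nat.zero_le _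
  exact ⟨Nat.sInf_mem ⟨_, hmem⟩, lt_of_le_of_lt (Nat.sInf_le hmem) (by omega)⟩

lemma height_lt_of_lt_closing {i k : ℕ} (hi : P.IsUp i) (hik : i < k) (hk : k ≤ P.closing i) :
    P.height i < P.height k := by
  obtain ⟨k, rfl⟩ : ∃ k', k = k' + 1 := ⟨k - 1, by omega⟩
  rcases Nat.lt_or_ge i k with h | h
  · have := Nat.notMem_of_lt_sInf (s := {k | i < k ∧ P.height (k + 1) ≤ P.height i}) (m := k)
      (by unfold closing at hk; omega)
    simp only [Set.mem_ofPred_eq, not_and, not_le] at this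
    exact this h
  · obtain rfl : k = i := by omega
    have := hi.2
    omega

lemma height_closing {i : ℕ} (hi : P.IsUp i) : P.height (P.closing i) = P.height i + 1 ∧
    P.height (P.closing i + 1) = P.height i := by
  obtain ⟨⟨hik, hle⟩, hN⟩ := closing_mem hi
  have := height_lt_of_lt_closing hi hik le_rfl
  have := P.step _ hN
  omega

lemma lt_closing {i : ℕ} (hi : P.IsUp i) : i < P.closing i := (closing_mem hi).1.1

lemma isDown_closing {i : ℕ} (hi : P.IsUp i) : P.IsDown (P.closing i) := by
  have := height_closing hi
  exact ⟨(closing_mem hi).2, by omega⟩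

lemma opening_lt {j : ℕ} (hj : P.IsDown j) :
    P.opening j < j ∧ P.height (P.opening j) < P.height j := by
  have hspec : P.height (P.opening j) < P.height j :=
    Nat.findGreatest_spec (P := fun i => P.height i < P.height j) (Nat.zero_le j)
      (by rw [P.height_zero, hj.2]; omega)
  refine ⟨lt_of_le_of_ne (Nat.findGreatest_le j) fun h => ?_, hspec⟩
  rw [h] at hspec
  exact lt_irrefl _ hspec

lemma height_le_of_opening_lt {j k : ℕ} (hok : P.opening j < k) (hkj : k ≤ j) :
    P.height j ≤ P.height k :=
  not_lt.1 (Nat.findGreatest_is_greatest (P := fun i => P.height i < P.height j) hok hkj)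

lemma isUp_opening {j : ℕ} (hj : P.IsDown j) :
    P.IsUp (P.opening j) ∧ P.height j = P.height (P.opening j) + 1 := by
  obtain ⟨hlt, hheight⟩ := opening_lt hj
  have := height_le_of_opening_lt (P := P) (Nat.lt_add_one _) hlt
  have := P.step _ (hlt.trans hj.1)
  refine ⟨⟨hlt.trans hj.1, by omega⟩, by omega⟩

lemma closing_opening {j : ℕ} (hj : P.IsDown j) : P.closing (P.opening j) = j := by
  obtain ⟨hup, hheight⟩ := isUp_opening hj
  have hle : P.closing (P.opening j) ≤ j :=
    Nat.sInf_le ⟨(opening_lt hj).1, by have := hj.2; omega⟩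
  refine le_antisymm hle (not_lt.1 fun h => ?_)
  have := height_le_of_opening_lt (P := P) (Nat.lt_add_one_of_lt (lt_closing hup)) h
  have := (closing_mem hup).1.2
  omega

lemma opening_closing {i : ℕ} (hi : P.IsUp i) : P.opening (P.closing i) = i := by
  have hheight := height_closing hi
  have hle : i ≤ P.opening (P.closing i) :=
    Nat.le_findGreatest (lt_closing hi).le (by omega)
  refine (le_antisymm hle (not_lt.1 fun h => ?_)).symm
  have := height_lt_of_lt_closing hi h (opening_lt (isDown_closing hi)).1.le
  have := (opening_lt (isDown_closing hi)).2
  omega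

lemma not_crossing {x y : ℕ} (hx : P.IsUp x) (hy : P.IsUp y) :
    ¬ (x < y ∧ y < P.closing x ∧ P.closing x < P.closing y) := by
  rintro ⟨hxy, hyx, hxy'⟩
  have := height_lt_of_lt_closing hx hxy hyx.le
  have := height_lt_of_lt_closing hy hyx hxy'.le
  have := (height_closing hx).1
  omega

variable {α : Type*} [DecidableEq α] {l : List α} {x y : α}

def ofList (l : List α) (x y : α) (hdom : ∀ k, (l.take k).count y ≤ (l.take k).count x)
    (hbal : l.count y = l.count x) : MotzkinPath l.length where
  height k := (l.take k).count x - (l.take k).count y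
  height_zero := by simp
  height_length := by simp [hbal]
  step k _ := by
    have := hdom k
    have := hdom (k + 1)
    have hx := l.count_take_add_one k x
    have hy := l.count_take_add_one k y
    split_ifs at hx hy <;> omega

variable {hdom : ∀ k, (l.take k).count y ≤ (l.take k).count x} {hbal : l.count y = l.count x}

lemma ofList_isUp_iff (hxy : x ≠ y) {k : ℕ} :
    (ofList l x y hdom hbal).IsUp k ↔ l[k]? = some x := by
  have := hdom k
  have hx := l.count_take_add_one k x
  have hy := l.count_take_add_one k y
  unfold IsUp ofList
  dsimp only
  constructor
  · rintro ⟨-, h⟩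
    by_contra hne
    split_ifs at hx hy <;> omega
  · intro h
    have hne : l[k]? ≠ some y := by rw [h]; simpa using hxy
    refine ⟨(List.getElem?_eq_some_iff.1 h).1, ?_⟩
    rw [if_pos h] at hx
    rw [if_neg hne] at hy
    omega

lemma ofList_isDown_iff (hxy : x ≠ y) {k : ℕ} :
    (ofList l x y hdom hbal).IsDown k ↔ l[k]? = some y := by
  have := hdom (k + 1)
  have hx := l.count_take_add_one k x
  have hy := l.count_take_add_one k y
  unfold IsDown ofList
  dsimp only
  constructor
  · rintro ⟨-, h⟩
    by_contra hne
    split_ifs at hx hy <;> omega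
  · intro h
    have hne : l[k]? ≠ some x := by rw [h]; simpa using hxy.symm
    refine ⟨(List.getElem?_eq_some_iff.1 h).1, ?_⟩
    rw [if_pos h] at hy
    rw [if_neg hne] at hx
    omega

end MotzkinPath

namespace MDiagram

variable {n : ℕ} (m : MDiagram n)

@[simp] lemma a_a (i : Fin (3 * n)) : m.a (m.a i) = m.a i := (m.coherent i _ (Or.inl rfl)).1
@[simp] lemma b_a (i : Fin (3 * n)) : m.b (m.a i) = m.b i := (m.coherent i _ (Or.inl rfl)).2.1
@[simp] lemma a_b (i : Fin (3 * n)) : m.a (m.b i) = m.a i :=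
  (m.coherent i _ (Or.inr (Or.inl rfl))).1
@[simp] lemma b_b (i : Fin (3 * n)) : m.b (m.b i) = m.b i :=
  (m.coherent i _ (Or.inr (Or.inl rfl))).2.1
@[simp] lemma c_b (i : Fin (3 * n)) : m.c (m.b i) = m.c i :=
  (m.coherent i _ (Or.inr (Or.inl rfl))).2.2
@[simp] lemma b_c (i : Fin (3 * n)) : m.b (m.c i) = m.b i :=
  (m.coherent i _ (Or.inr (Or.inr rfl))).2.1
@[simp] lemma c_c (i : Fin (3 * n)) : m.c (m.c i) = m.c i :=
  (m.coherent i _ (Or.inr (Or.inr rfl))).2.2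

lemma b_eq_of_a_eq {i j : Fin (3 * n)} (h : m.a i = m.a j) : m.b i = m.b j := by
  rw [← m.b_a i, h, m.b_a]

lemma b_eq_of_c_eq {i j : Fin (3 * n)} (h : m.c i = m.c j) : m.b i = m.b j := by
  rw [← m.b_c i, h, m.b_c]

lemma c_eq_of_b_eq {i j : Fin (3 * n)} (h : m.b i = m.b j) : m.c i = m.c j := by
  rw [← m.c_b i, h, m.c_b]

lemma mword_eq_two_iff {i : Fin (3 * n)} : mword m i = 2 ↔ i = m.a i := by
  unfold mword
  split_ifs with ha hb
  · exact iff_of_true rfl ha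
  · exact iff_of_false (by decide) ha
  · exact iff_of_false (by decide) ha

lemma mword_eq_one_iff {i : Fin (3 * n)} : mword m i = 1 ↔ i = m.b i := by
  unfold mword
  split_ifs with ha hb
  · exact iff_of_false (by decide) fun hb => (m.hab i).ne (ha.symm.trans hb)
  · exact iff_of_true rfl hb
  · exact iff_of_false (by decide) hb

lemma mword_eq_zero_iff {i : Fin (3 * n)} : mword m i = 0 ↔ i = m.c i := by
  unfold mword
  split_ifs with ha hb
  · exact iff_of_false (by decide) fun hc => ((m.hab i).trans (m.hbc i)).ne (ha.symm.trans hc)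
  · exact iff_of_false (by decide) fun hc => (m.hbc i).ne (hb.symm.trans hc)
  · exact iff_of_true rfl (((m.mem_triple i).resolve_left ha).resolve_left hb)

@[simp] lemma mword_a (i : Fin (3 * n)) : mword m (m.a i) = 2 := by simp [mword_eq_two_iff]
@[simp] lemma mword_b (i : Fin (3 * n)) : mword m (m.b i) = 1 := by simp [mword_eq_one_iff]
@[simp] lemma mword_c (i : Fin (3 * n)) : mword m (m.c i) = 0 := by simp [mword_eq_zero_iff]

lemma isNoncrossingMatching_a :
    IsNoncrossingMatching m.a {j | mword m j = 1} {i | mword m i = 2} where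
  bijOn := by
    refine ⟨fun j _ => m.mword_a j, fun j hj j' hj' h => ?_,
      fun i hi => ⟨m.b i, m.mword_b i, ?_⟩⟩
    · simp only [Set.mem_ofPred_eq, mword_eq_one_iff] at hj hj'
      rw [hj, hj', m.b_eq_of_a_eq h]
    · simp only [Set.mem_ofPred_eq, mword_eq_two_iff] at hi
      simp [← hi]
  lt j hj := by
    simp only [Set.mem_ofPred_eq, mword_eq_one_iff] at hj
    simpa [← hj] using m.hab j
  noncrossing j hj j' hj' := by
    simp only [Set.mem_ofPred_eq, mword_eq_one_iff] at hj hj'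
    simpa [← hj, ← hj'] using m.noncrossL j j'

open OrderDual in
/-- Read from right to left, the right arcs match each middle point with its right endpoint. -/
lemma isNoncrossingMatching_c :
    IsNoncrossingMatching (toDual ∘ m.c ∘ ofDual) (ofDual ⁻¹' {j | mword m j = 1})
      (ofDual ⁻¹' {i | mword m i = 0}) where
  bijOn := by
    refine ⟨fun j _ => m.mword_c _, fun j hj j' hj' h => ?_,
      fun i hi => ⟨toDual (m.b (ofDual i)), m.mword_b _, ?_⟩⟩
    · simp only [Set.mem_preimage, Set.mem_ofPred_eq, mword_eq_one_iff] at hj hj'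
      simp only [Function.comp_apply, toDual_inj] at h
      rw [← toDual_ofDual j, ← toDual_ofDual j', hj, hj', m.b_eq_of_c_eq h]
    · simp only [Set.mem_preimage, Set.mem_ofPred_eq, mword_eq_zero_iff] at hi
      simp [← hi]
  lt j hj := by
    simp only [Set.mem_preimage, Set.mem_ofPred_eq, mword_eq_one_iff] at hj
    simpa [← hj, toDual_lt] using m.hbc (ofDual j)
  noncrossing j hj j' hj' := by
    rintro ⟨h1, h2, h3⟩
    simp only [Set.mem_preimage, Set.mem_ofPred_eq, mword_eq_one_iff] at hj hj'
    refine m.noncrossR (ofDual j') (ofDual j) ⟨?_, ?_, h1⟩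
    · rwa [← hj, ← hj']
    · rwa [← hj]

lemma ext {m' : MDiagram n} (ha : m.a = m'.a) (hb : m.b = m'.b) (hc : m.c = m'.c) : m = m' := by
  cases m
  cases m'
  cases ha
  cases hb
  cases hc
  rfl

open OrderDual in
theorem mword_injective : Function.Injective (mword (n := n)) := by
  intro m m' hw
  have hA : Set.EqOn m.a m'.a {j | mword m j = 1} :=
    m.isNoncrossingMatching_a.eqOn (hw ▸ m'.isNoncrossingMatching_a)
  have hC : Set.EqOn m.c m'.c {j | mword m j = 1} := fun j hj =>
    toDual_inj.1 <|
      m.isNoncrossingMatching_c.eqOn (hw ▸ m'.isNoncrossingMatching_c) (x := toDual j) hj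
  have hb : ∀ i, m.b i = m'.b i := by
    intro i
    have hj := m.mword_b i
    have hj' : m.b i = m'.b (m.b i) := (m'.mword_eq_one_iff).1 (hw ▸ hj)
    have hi : i = m'.a (m.b i) ∨ i = m'.b (m.b i) ∨ i = m'.c (m.b i) := by
      rw [← hA hj, ← hC hj, ← hj', m.a_b, m.c_b]
      exact m.mem_triple i
    rw [(m'.coherent _ i hi).2.1, ← hj']
  refine m.ext (funext fun i => ?_) (funext hb) (funext fun i => ?_)
  · rw [← m.a_b, hA (m.mword_b i), hb, m'.a_b]
  · rw [← m.c_b, hC (m.mword_b i), hb, m'.c_b]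

theorem isBallot_mword : IsBallot (List.ofFn (mword m)) := by
  intro u hu
  rw [List.prefix_iff_eq_take.1 hu]
  simp only [List.count_take_ofFn]
  have hL : IsLowerSet {i : Fin (3 * n) | i.val < u.length} := fun _ _ hyx hx =>
    Nat.lt_of_le_of_lt (Fin.le_def.1 hyx) hx
  constructor
  · exact Set.ncard_inter_le_of_mapsTo m.isNoncrossingMatching_a.bijOn.mapsTo
      m.isNoncrossingMatching_a.bijOn.injOn (fun j hj => (m.isNoncrossingMatching_a.lt j hj).le) hL
  · refine Set.ncard_inter_le_of_mapsTo (f := m.b) (fun j _ => m.mword_b j)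
      (fun j hj j' hj' h => ?_) (fun j hj => ?_) hL
    · simp only [Set.mem_ofPred_eq, mword_eq_zero_iff] at hj hj'
      rw [hj, hj', m.c_eq_of_b_eq h]
    · simp only [Set.mem_ofPred_eq, mword_eq_zero_iff] at hj
      simpa [← hj] using (m.hbc j).le

theorem mword_mem_ballotWords : List.ofFn (mword m) ∈ ballotWords n n n := by
  have hcount (t : Fin 3) : (List.ofFn (mword m)).count t = {i | mword m i = t}.ncard := by
    simpa [List.take_of_length_le] using List.count_take_ofFn (mword m) t (3 * n)
  have h21 := m.isNoncrossingMatching_a.bijOn.ncard_eq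
  have h01 : {i | mword m i = 1}.ncard ≤ {i | mword m i = 0}.ncard := by
    refine Set.ncard_le_ncard_of_injOn m.c (fun j _ => m.mword_c j) (fun j hj j' hj' h => ?_)
      (Set.toFinite _)
    simp only [Set.mem_ofPred_eq, mword_eq_one_iff] at hj hj'
    rw [hj, hj', m.b_eq_of_c_eq h]
  have h10 := (m.isBallot_mword _ List.prefix_rfl).2
  have hlen := List.length_eq_count_fin_three (List.ofFn (mword m))
  simp only [List.length_ofFn, hcount] at hlen h10
  refine ⟨m.isBallot_mword, ?_, ?_, ?_⟩ <;> simp only [hcount] <;> omega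

end MDiagram

section OfBallot

variable {n : ℕ} {l : List (Fin 3)} (hl : l ∈ ballotWords n n n)

noncomputable def leftArcPath : MotzkinPath l.length :=
  .ofList l 2 1 (fun k => (hl.1 _ (l.take_prefix k)).1) (by rw [hl.2.1, hl.2.2.1])

noncomputable def rightArcPath : MotzkinPath l.length :=
  .ofList l 1 0 (fun k => (hl.1 _ (l.take_prefix k)).2) (by rw [hl.2.2.1, hl.2.2.2])

lemma leftArcPath_isUp_iff {k : ℕ} : (leftArcPath hl).IsUp k ↔ l[k]? = some 2 :=
  MotzkinPath.ofList_isUp_iff (by decide)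

lemma leftArcPath_isDown_iff {k : ℕ} : (leftArcPath hl).IsDown k ↔ l[k]? = some 1 :=
  MotzkinPath.ofList_isDown_iff (by decide)

lemma rightArcPath_isUp_iff {k : ℕ} : (rightArcPath hl).IsUp k ↔ l[k]? = some 1 :=
  MotzkinPath.ofList_isUp_iff (by decide)

lemma rightArcPath_isDown_iff {k : ℕ} : (rightArcPath hl).IsDown k ↔ l[k]? = some 0 :=
  MotzkinPath.ofList_isDown_iff (by decide)

/-- The middle point of the triple through `i` in the M-diagram built from `l`. -/
noncomputable def middle (i : ℕ) : ℕ :=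
  if l[i]? = some 2 then (leftArcPath hl).closing i
  else if l[i]? = some 1 then i else (rightArcPath hl).opening i

lemma getElem?_eq_some_cases {i : ℕ} (hi : i < l.length) :
    l[i]? = some 2 ∨ l[i]? = some 1 ∨ l[i]? = some 0 := by
  rw [List.getElem?_eq_getElem hi]
  generalize l[i] = t
  fin_cases t <;> simp

lemma middle_of_two {i : ℕ} (h : l[i]? = some 2) :
    middle hl i = (leftArcPath hl).closing i := if_pos h

lemma middle_of_one {i : ℕ} (h : l[i]? = some 1) : middle hl i = i := by
  rw [middle, if_neg (by rw [h]; decide), if_pos h]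

lemma middle_of_zero {i : ℕ} (h : l[i]? = some 0) :
    middle hl i = (rightArcPath hl).opening i := by
  rw [middle, if_neg (by rw [h]; decide), if_neg (by rw [h]; decide)]

lemma getElem?_middle {i : ℕ} (hi : i < l.length) : l[middle hl i]? = some 1 := by
  rcases getElem?_eq_some_cases hi with h | h | h
  · rw [middle_of_two hl h, ← leftArcPath_isDown_iff hl]
    exact MotzkinPath.isDown_closing ((leftArcPath_isUp_iff hl).2 h)
  · rwa [middle_of_one hl h]
  · rw [middle_of_zero hl h, ← rightArcPath_isUp_iff hl]
    exact (MotzkinPath.isUp_opening ((rightArcPath_isDown_iff hl).2 h)).1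

lemma isDown_middle (i : Fin (3 * n)) : (leftArcPath hl).IsDown (middle hl i) :=
  (leftArcPath_isDown_iff hl).2 (getElem?_middle hl (val_lt_length_of_mem_ballotWords hl i))

lemma isUp_middle (i : Fin (3 * n)) : (rightArcPath hl).IsUp (middle hl i) :=
  (rightArcPath_isUp_iff hl).2 (getElem?_middle hl (val_lt_length_of_mem_ballotWords hl i))

lemma middle_opening_middle (i : Fin (3 * n)) :
    middle hl ((leftArcPath hl).opening (middle hl i)) = middle hl i := by
  have hup := (MotzkinPath.isUp_opening (isDown_middle hl i)).1
  rw [middle_of_two hl ((leftArcPath_isUp_iff hl).1 hup),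
    MotzkinPath.closing_opening (isDown_middle hl i)]

lemma middle_middle (i : Fin (3 * n)) : middle hl (middle hl i) = middle hl i :=
  middle_of_one hl (getElem?_middle hl (val_lt_length_of_mem_ballotWords hl i))

lemma middle_closing_middle (i : Fin (3 * n)) :
    middle hl ((rightArcPath hl).closing (middle hl i)) = middle hl i := by
  have hdown := MotzkinPath.isDown_closing (isUp_middle hl i)
  rw [middle_of_zero hl ((rightArcPath_isDown_iff hl).1 hdown),
    MotzkinPath.opening_closing (isUp_middle hl i)]

lemma opening_middle_of_two {i : ℕ} (h : l[i]? = some 2) :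
    (leftArcPath hl).opening (middle hl i) = i := by
  rw [middle_of_two hl h, MotzkinPath.opening_closing ((leftArcPath_isUp_iff hl).2 h)]

lemma closing_middle_of_zero {i : ℕ} (h : l[i]? = some 0) :
    (rightArcPath hl).closing (middle hl i) = i := by
  rw [middle_of_zero hl h, MotzkinPath.closing_opening ((rightArcPath_isDown_iff hl).2 h)]

noncomputable def MDiagram.ofBallot : MDiagram n where
  a i := ⟨(leftArcPath hl).opening (middle hl i),
    ((MotzkinPath.opening_lt (isDown_middle hl i)).1.trans (isDown_middle hl i).1).trans_eq
      (length_of_mem_ballotWords hl)⟩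
  b i := ⟨middle hl i, (isDown_middle hl i).1.trans_eq (length_of_mem_ballotWords hl)⟩
  c i := ⟨(rightArcPath hl).closing (middle hl i),
    (MotzkinPath.isDown_closing (isUp_middle hl i)).1.trans_eq (length_of_mem_ballotWords hl)⟩
  hab i := (MotzkinPath.opening_lt (isDown_middle hl i)).1
  hbc i := MotzkinPath.lt_closing (isUp_middle hl i)
  mem_triple i := by
    simp only [Fin.ext_iff]
    rcases getElem?_eq_some_cases (val_lt_length_of_mem_ballotWords hl i) with h | h | h
    · exact Or.inl (opening_middle_of_two hl h).symm
    · exact Or.inr (Or.inl (middle_of_one hl h).symm)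
    · exact Or.inr (Or.inr (closing_middle_of_zero hl h).symm)
  coherent i j hj := by
    have hmid : middle hl j = middle hl i := by
      simp only [Fin.ext_iff] at hj
      rcases hj with h | h | h <;> rw [h]
      · exact middle_opening_middle hl i
      · exact middle_middle hl i
      · exact middle_closing_middle hl i
    simp only [hmid, and_self]
  noncrossL i j := by
    have := MotzkinPath.not_crossing (MotzkinPath.isUp_opening (isDown_middle hl i)).1
      (MotzkinPath.isUp_opening (isDown_middle hl j)).1
    rwa [MotzkinPath.closing_opening (isDown_middle hl i),
      MotzkinPath.closing_opening (isDown_middle hl j)] at this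
  noncrossR i j := MotzkinPath.not_crossing (isUp_middle hl i) (isUp_middle hl j)

theorem ofFn_mword_ofBallot : List.ofFn (mword (MDiagram.ofBallot hl)) = l := by
  refine List.ext_getElem (by simp [length_of_mem_ballotWords hl]) fun k hk hkl => ?_
  rw [List.getElem_ofFn]
  rcases getElem?_eq_some_cases hkl with h | h | h <;>
    rw [(List.getElem?_eq_some_iff.1 h).2]
  · exact (MDiagram.mword_eq_two_iff _).2 (Fin.ext (opening_middle_of_two hl h).symm)
  · exact (MDiagram.mword_eq_one_iff _).2 (Fin.ext (middle_of_one hl h).symm)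
  · exact (MDiagram.mword_eq_zero_iff _).2 (Fin.ext (closing_middle_of_zero hl h).symm)

end OfBallot

/-- The number of M-diagrams on `3n` points equals the 3-dimensional Catalan
number `2·(3n)! / (n!·(n+1)!·(n+2)!)`. -/
theorem stmt15 (n : ℕ) :
    Nat.card (MDiagram n) =
      2 * Nat.factorial (3 * n) /
        (Nat.factorial n * Nat.factorial (n + 1) * Nat.factorial (n + 2)) := by
  have hbij : Function.Bijective fun m : MDiagram n =>
      (⟨List.ofFn (mword m), m.mword_mem_ballotWords⟩ : ballotWords n n n) :=
    ⟨fun m m' h => MDiagram.mword_injective (List.ofFn_injective (congrArg Subtype.val h)),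
      fun l => ⟨MDiagram.ofBallot l.2, Subtype.ext (ofFn_mword_ofBallot l.2)⟩⟩
  have hformula := ncard_ballotWords_mul_factorial n n n n.le_succ n.le_succ
  rw [Nat.card_congr (Equiv.ofBijective _ hbij), Nat.card_coe_set_eq]
  rw [show n + n + n = 3 * n by ring] at hformula
  refine (Nat.div_eq_of_eq_mul_left (by positivity) ?_).symm
  zify
  linear_combination -hformula
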